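/- Let a and b be positive semidefinite operators on a finite-dimensional complex Hilbert space H. Then range(a) ∩ range(b) = {0} if and only if the only positive semidefinite operator c with c ≤ a and c ≤ b (in the Loewner order) is c = 0. -/

import Mathlib

/-!
If `0 ≤ C ≤ A`, then `⟪C x, x⟫ ≤ ⟪A x, x⟫` forces `ker A ≤ ker C`, and since the range of a
self-adjoint operator is the orthogonal complement of its kernel, `range C ≤ range A`; so a common
lower bound of `A` and `B` has its range inside `range A ⊓ range B`. Conversely, Cauchy–Schwarz for
the semi-inner product `⟪A ·, ·⟫` reads `|⟪A w, x⟫|² ≤ ⟪A w, w⟫ ⟪A x, x⟫`, i.e. the rank-one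
operator `|v⟩⟨v|` with `v = A w` lies below a multiple of `A`. A nonzero `v` in both ranges thus
gives the nonzero common lower bound `t |v⟩⟨v|` for small `t > 0`.
-/

open scoped ComplexOrder InnerProductSpace
open InnerProductSpace RCLike

namespace ContinuousLinearMap

theorem le_of_forall_re_inner_le {𝕜 E : Type*} [RCLike 𝕜] [NormedAddCommGroup E]
    [InnerProductSpace 𝕜 E] {S T : E →L[𝕜] E} (hS : S.IsSymmetric) (hT : T.IsSymmetric)
    (h : ∀ x, re ⟪S x, x⟫_𝕜 ≤ re ⟪T x, x⟫_𝕜) : S ≤ T :=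
  ⟨hT.sub hS, fun x => by simpa [reApplyInnerSelf, inner_sub_left] using h x⟩

variable {E : Type*} [NormedAddCommGroup E] [InnerProductSpace ℂ E]

namespace IsPositive

variable [CompleteSpace E] {T : E →L[ℂ] E}

theorem norm_inner_sq_le (hT : T.IsPositive) (x y : E) :
    ‖⟪T x, y⟫_ℂ‖ ^ 2 ≤ re ⟪T x, x⟫_ℂ * re ⟪T y, y⟫_ℂ := by
  set S := CFC.sqrt T
  have hS : IsSelfAdjoint S := (CFC.sqrt_nonneg T).isSelfAdjoint
  have hT_inner (u z : E) : ⟪T u, z⟫_ℂ = ⟪S u, S z⟫_ℂ := by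
    rw [← CFC.sqrt_mul_sqrt_self T ((nonneg_iff_isPositive T).mpr hT), mul_def, comp_apply,
      ← adjoint_inner_right, hS.adjoint_eq]
  have hT_re (u : E) : re ⟪T u, u⟫_ℂ = ‖S u‖ ^ 2 := by
    rw [hT_inner, inner_self_eq_norm_sq]
  rw [hT_inner, hT_re, hT_re, ← mul_pow]
  exact pow_le_pow_left₀ (norm_nonneg _) (norm_inner_le_norm _ _) 2

theorem apply_eq_zero_of_re_inner_self_eq_zero (hT : T.IsPositive) {x : E}
    (hx : re ⟪T x, x⟫_ℂ = 0) : T x = 0 := by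
  simpa [hx] using hT.norm_inner_sq_le x (T x)

theorem ker_le_ker_of_le {A : E →L[ℂ] E} (hT : T.IsPositive) (hTA : T ≤ A) :
    A.ker ≤ T.ker := by
  intro x hx
  rw [LinearMap.mem_ker, coe_coe] at hx ⊢
  have hT_nonneg := hT.re_inner_nonneg_left x
  have hAT_nonneg := ((le_def T A).mp hTA).re_inner_nonneg_left x
  rw [sub_apply, hx, zero_sub, inner_neg_left, map_neg, neg_nonneg] at hAT_nonneg
  exact hT.apply_eq_zero_of_re_inner_self_eq_zero (le_antisymm hAT_nonneg hT_nonneg)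

theorem rankOne_le_re_inner_smul {A : E →L[ℂ] E} (hA : A.IsPositive) (w : E) :
    rankOne ℂ (A w) (A w) ≤ re ⟪A w, w⟫_ℂ • A := by
  have hkA : 0 ≤ re ⟪A w, w⟫_ℂ • A :=
    smul_nonneg (hA.re_inner_nonneg_left w) ((nonneg_iff_isPositive A).mpr hA)
  refine le_of_forall_re_inner_le (isPositive_rankOne_self _).isSymmetric
    ((nonneg_iff_isPositive _).mp hkA).isSymmetric fun x => ?_
  calc re ⟪rankOne ℂ (A w) (A w) x, x⟫_ℂ = ‖⟪A w, x⟫_ℂ‖ ^ 2 := by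
        simp only [rankOne_apply, inner_smul_left, RCLike.conj_mul]
        norm_cast
    _ ≤ re ⟪A w, w⟫_ℂ * re ⟪A x, x⟫_ℂ := hA.norm_inner_sq_le w x
    _ = re ⟪(re ⟪A w, w⟫_ℂ • A) x, x⟫_ℂ := by
        rw [smul_apply, RCLike.real_smul_eq_coe_smul (K := ℂ), inner_smul_real_left,
          RCLike.smul_re]

theorem exists_pos_smul_rankOne_le {A : E →L[ℂ] E} (hA : A.IsPositive) {v : E}
    (hv : v ∈ A.range) : ∃ t : ℝ, 0 < t ∧ t • rankOne ℂ v v ≤ A := by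
  obtain ⟨w, rfl⟩ := hv
  set k := re ⟪A w, w⟫_ℂ
  have hk : 0 ≤ k := hA.re_inner_nonneg_left w
  refine ⟨(1 + k)⁻¹, by positivity, ?_⟩
  calc (1 + k)⁻¹ • rankOne ℂ (A w) (A w) ≤ (1 + k)⁻¹ • k • A :=
        smul_le_smul_of_nonneg_left (hA.rankOne_le_re_inner_smul w) (by positivity)
    _ = ((1 + k)⁻¹ * k) • A := smul_smul _ _ _
    _ ≤ A := smul_le_of_le_one_left ((nonneg_iff_isPositive A).mpr hA)
        (by rw [inv_mul_le_one₀ (by positivity)]; linarith)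

end IsPositive

theorem range_le_range_of_le [FiniteDimensional ℂ E] {A C : E →L[ℂ] E} (hC : 0 ≤ C)
    (hCA : C ≤ A) : C.range ≤ A.range := by
  have := FiniteDimensional.complete ℂ E
  have hC' := (nonneg_iff_isPositive C).mp hC
  have hA' := (nonneg_iff_isPositive A).mp (hC.trans hCA)
  exact (ker_le_ker_iff_range_le_range hC'.isSymmetric hA'.isSymmetric).mp
    (hC'.ker_le_ker_of_le hCA)

theorem range_inf_range_eq_bot_iff [FiniteDimensional ℂ E] {A B : E →L[ℂ] E} (hA : 0 ≤ A)
    (hB : 0 ≤ B) :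
    A.range ⊓ B.range = ⊥ ↔ ∀ C : E →L[ℂ] E, 0 ≤ C → C ≤ A → C ≤ B → C = 0 := by
  have := FiniteDimensional.complete ℂ E
  refine ⟨fun h C hC hCA hCB => ?_, fun h => (Submodule.eq_bot_iff _).mpr fun v hv => ?_⟩
  · have hC_range : C.range = ⊥ :=
      eq_bot_iff.mpr (h ▸ le_inf (range_le_range_of_le hC hCA) (range_le_range_of_le hC hCB))
    exact coe_inj.mp (LinearMap.range_eq_bot.mp hC_range)
  · obtain ⟨tA, htA, hleA⟩ := ((nonneg_iff_isPositive A).mp hA).exists_pos_smul_rankOne_le hv.1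
    obtain ⟨tB, htB, hleB⟩ := ((nonneg_iff_isPositive B).mp hB).exists_pos_smul_rankOne_le hv.2
    have hR : 0 ≤ rankOne ℂ v v := (nonneg_iff_isPositive _).mpr (isPositive_rankOne_self v)
    have ht : 0 < min tA tB := lt_min htA htB
    have hC := h (min tA tB • rankOne ℂ v v) (smul_nonneg ht.le hR)
      ((smul_le_smul_of_nonneg_right (min_le_left _ _) hR).trans hleA)
      ((smul_le_smul_of_nonneg_right (min_le_right _ _) hR).trans hleB)
    simpa [ht.ne', rankOne_eq_zero] using hC

end ContinuousLinearMap

namespace Matrix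

variable {𝕜 n : Type*} [RCLike 𝕜] [Fintype n] [DecidableEq n]

theorem range_toEuclideanCLM (A : Matrix n n 𝕜) :
    (toEuclideanCLM (n := n) (𝕜 := 𝕜) A).range =
      (LinearMap.range A.mulVecLin).map (WithLp.linearEquiv 2 𝕜 (n → 𝕜)).symm.toLinearMap := by
  let e := WithLp.linearEquiv 2 𝕜 (n → 𝕜)
  change (e.symm.toLinearMap ∘ₗ A.mulVecLin ∘ₗ e.toLinearMap).range = _
  rw [LinearMap.range_comp, LinearEquiv.range_comp]

theorem toEuclideanCLM_le_toEuclideanCLM_iff {A B : Matrix n n 𝕜} :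
    toEuclideanCLM (n := n) (𝕜 := 𝕜) A ≤ toEuclideanCLM (n := n) (𝕜 := 𝕜) B ↔
      (B - A).PosSemidef := by
  rw [ContinuousLinearMap.le_def, ← map_sub, ← ContinuousLinearMap.isPositive_toLinearMap_iff,
    coe_toEuclideanCLM_eq_toEuclideanLin, isPositive_toEuclideanLin_iff]

theorem toEuclideanCLM_nonneg_iff {A : Matrix n n 𝕜} :
    0 ≤ toEuclideanCLM (n := n) (𝕜 := 𝕜) A ↔ A.PosSemidef := by
  rw [← map_zero (toEuclideanCLM (n := n) (𝕜 := 𝕜)), toEuclideanCLM_le_toEuclideanCLM_iff,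
    sub_zero]

end Matrix

theorem range_inf_bot_iff_common_lower_bound_zero {n : ℕ}
    (a b : Matrix (Fin n) (Fin n) ℂ) (ha : a.PosSemidef) (hb : b.PosSemidef) :
    (LinearMap.range a.mulVecLin ⊓ LinearMap.range b.mulVecLin = ⊥) ↔
      (∀ c : Matrix (Fin n) (Fin n) ℂ, c.PosSemidef → (a - c).PosSemidef →
        (b - c).PosSemidef → c = 0) := by
  rw [← Submodule.map_eq_bot_iff (e := (WithLp.linearEquiv 2 ℂ (Fin n → ℂ)).symm),
    Submodule.map_inf _ (WithLp.linearEquiv 2 ℂ (Fin n → ℂ)).symm.injective,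
    ← Matrix.range_toEuclideanCLM, ← Matrix.range_toEuclideanCLM,
    ContinuousLinearMap.range_inf_range_eq_bot_iff (Matrix.toEuclideanCLM_nonneg_iff.mpr ha)
      (Matrix.toEuclideanCLM_nonneg_iff.mpr hb),
    (EquivLike.surjective (Matrix.toEuclideanCLM (n := Fin n) (𝕜 := ℂ))).forall]
  simp only [Matrix.toEuclideanCLM_nonneg_iff, Matrix.toEuclideanCLM_le_toEuclideanCLM_iff,
    map_eq_zero_iff _ (EquivLike.injective _)]
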